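/- arXiv:2201.07548 — 3 statements merged into one kernel-verified Lean document; each statement's English description precedes it below -/
import Mathlib

section
/- In a directed acyclic graph, if there is a unique directed path from vertex i to vertex j and this path passes through the edge (ν, μ), then the entry T_{ji} of T = (I − G)^{-1} factors as T_{ji} = T_{jμ} · G_{μν} · T_{νi}. -/
/-- A directed path from `i` to `j`: a nonempty list of distinct vertices,
starting at `i`, ending at `j`, with consecutive vertices joined by edges. -/
def IsDirPath {V : Type*} (E : V → V → Prop) (i j : V) (l : List V) : Prop :=
  l.Chain' E ∧ l.Nodup ∧ l.head? = some i ∧ l.getLast? = some j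

section Helpers

variable {V : Type*} {F : Type*} [Field F]

/-- The weight of a walk `[v₀, …, vₖ]` : the product `∏ G v_{t+1} v_t`. -/
def pw (G : V → V → F) : List V → F
  | [] => 1
  | [_] => 1
  | a :: b :: t => G b a * pw G (b :: t)

lemma pw_concat (G : V → V → F) : ∀ (l : List V) (hl : l ≠ []) (b : V),
    pw G (l ++ [b]) = pw G l * G b (l.getLast hl)
  | [], hl, _ => absurd rfl hl
  | [a], _, b => by simp [pw]
  | a :: c :: t, _, b => by
      have := pw_concat G (c :: t) (by simp) b
      simp only [List.cons_append, List.append_eq, pw] at this ⊢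
      rw [this]
      ring_nf
      simp [List.getLast]

lemma pw_glue (G : V → V → F) : ∀ (x : List V) (u : V) (y : List V),
    pw G (x ++ u :: y) = pw G (x ++ [u]) * pw G (u :: y)
  | [], u, y => by simp [pw]
  | [a], u, y => by simp [pw]
  | a :: c :: t, u, y => by
      have := pw_glue G (c :: t) u y
      simp only [List.cons_append, List.append_eq, pw] at this ⊢
      rw [this]; ring

lemma chain'_rtg_last {E : V → V → Prop} :
    ∀ (l : List V), l.Chain' E → ∀ x ∈ l, ∀ m, l.getLast? = some m →
      Relation.ReflTransGen E x m
  | [], _, x, hx, _, _ => absurd hx List.not_mem_nil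
  | [a], _, x, hx, m, hm => by
      simp at hx hm; subst hx; subst hm; exact Relation.ReflTransGen.refl
  | a :: c :: t, hch, x, hx, m, hm => by
      have hE : E a c := (List.isChain_cons_cons.mp hch).1
      have hch' : (c :: t).Chain' E := (List.isChain_cons_cons.mp hch).2
      have hm' : (c :: t).getLast? = some m := by
        rwa [List.getLast?_cons_cons] at hm
      rcases List.mem_cons.mp hx with h | h
      · subst h
        exact Relation.ReflTransGen.head hE
          (chain'_rtg_last _ hch' c List.mem_cons_self m hm')
      · exact chain'_rtg_last _ hch' x h m hm'

lemma chain'_rtg_head {E : V → V → Prop} :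
    ∀ (l : List V), l.Chain' E → ∀ h0, l.head? = some h0 → ∀ x ∈ l,
      Relation.ReflTransGen E h0 x
  | [], _, _, hh, _, _ => by simp at hh
  | a :: t, hch, h0, hh, x, hx => by
      simp at hh; subst hh
      rcases List.mem_cons.mp hx with h | h
      · subst h; exact Relation.ReflTransGen.refl
      · match t, hch, h with
        | c :: t', hch, h =>
          have hE : E a c := (List.isChain_cons_cons.mp hch).1
          exact Relation.ReflTransGen.head hE
            (chain'_rtg_head _ (List.isChain_cons_cons.mp hch).2 c rfl x h)

/-- If there is a path from `a` to `m` and an edge `m → b`, acyclicity forces `b ∉ r`. -/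
lemma not_mem_of_path_edge {E : V → V → Prop} (hacyc : ∀ v, ¬ Relation.TransGen E v v)
    {a m b : V} {r : List V} (hr : IsDirPath E a m r) (hE : E m b) : b ∉ r := fun hb =>
  hacyc b (Relation.TransGen.tail' (chain'_rtg_last r hr.1 b hb m hr.2.2.2) hE)

/-- Extending a path by one edge. -/
lemma extend_path {E : V → V → Prop} {a m b : V} {r : List V}
    (hr : IsDirPath E a m r) (hE : E m b) (hb : b ∉ r) : IsDirPath E a b (r ++ [b]) := by
  obtain ⟨hch, hnd, hhd, hlast⟩ := hr
  refine ⟨?_, ?_, ?_, List.getLast?_concat⟩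
  · rw [List.Chain', List.isChain_append]
    refine ⟨hch, List.isChain_singleton b, ?_⟩
    intro x hx y hy
    simp only [List.head?_cons, Option.mem_some_iff] at hy
    rw [hlast] at hx
    simp only [Option.mem_some_iff] at hx
    subst hx; subst hy; exact hE
  · exact List.Nodup.append hnd (List.nodup_singleton b)
      (by intro x hxr hxb; simp at hxb; subst hxb; exact hb hxr)
  · rw [List.head?_append, hhd]; rfl

end Helpers

/-- Key lemma: in a DAG, `T b a` is `0` if there is no path `a → b`, and equals the
weight of the unique path if the path from `a` to `b` is unique. -/
lemma key_path_sum {L : ℕ} {F : Type*} [Field F] (E : Fin L → Fin L → Prop)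
    (hacyc : ∀ v, ¬ Relation.TransGen E v v)
    (G T : Matrix (Fin L) (Fin L) F)
    (hsupp : ∀ i j, G i j ≠ 0 → E j i)
    (hstep : ∀ b a, T b a = (1 : Matrix (Fin L) (Fin L) F) b a + ∑ m, G b m * T m a) :
    ∀ b a, ((¬ ∃ l, IsDirPath E a b l) → T b a = 0) ∧
      (∀ p, IsDirPath E a b p → (∀ l, IsDirPath E a b l → l = p) → T b a = pw G p) := by
  have wfT : WellFounded (Relation.TransGen E) := by
    have h1 : IsTrans (Fin L) (Relation.TransGen E) := ⟨fun a b c => Relation.TransGen.trans⟩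
    have h2 : IsIrrefl (Fin L) (Relation.TransGen E) := ⟨hacyc⟩
    exact Finite.wellFounded_of_trans_of_irrefl _
  have wfE : WellFounded E := Subrelation.wf (fun h => Relation.TransGen.single h) wfT
  intro b
  induction b using wfE.induction with
  | _ b IH =>
  intro a
  constructor
  · -- no path
    intro hno
    have hab : a ≠ b := by
      rintro rfl
      exact hno ⟨[a], List.isChain_singleton a, List.nodup_singleton a, rfl, rfl⟩
    rw [hstep b a, Matrix.one_apply_ne (Ne.symm hab), zero_add]
    apply Finset.sum_eq_zero
    intro m _
    by_cases hg : G b m = 0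
    · rw [hg, zero_mul]
    · have hE : E m b := hsupp b m hg
      have hnom : ¬ ∃ l, IsDirPath E a m l := by
        rintro ⟨r, hr⟩
        exact hno ⟨r ++ [b], extend_path hr hE (not_mem_of_path_edge hacyc hr hE)⟩
      rw [(IH m hE a).1 hnom, mul_zero]
  · -- unique path
    intro p hp hup
    by_cases hab : a = b
    · subst hab
      have hpa : p = [a] :=
        (hup [a] ⟨List.isChain_singleton a, List.nodup_singleton a, rfl, rfl⟩).symm
      subst hpa
      rw [hstep a a, Matrix.one_apply_eq]
      have hz : ∑ m, G a m * T m a = 0 := by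
        apply Finset.sum_eq_zero
        intro m _
        by_cases hg : G a m = 0
        · rw [hg, zero_mul]
        · have hE : E m a := hsupp a m hg
          have hnom : ¬ ∃ l, IsDirPath E a m l := by
            rintro ⟨r, hch, hnd, hhd, hlast⟩
            exact hacyc a (Relation.TransGen.tail'
              (chain'_rtg_last r hch a (List.mem_of_mem_head? (by rw [hhd]; rfl)) m hlast) hE)
          rw [(IH m hE a).1 hnom, mul_zero]
      rw [hz, add_zero]; rfl
    · obtain ⟨hch, hnd, hhd, hlast⟩ := hp
      have hpne : p ≠ [] := by rintro rfl; simp at hhd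
      have hgl : p.getLast hpne = b := by
        rw [List.getLast?_eq_getLast hpne] at hlast
        exact Option.some_injective _ hlast
      have hpd : p.dropLast ++ [b] = p := by
        rw [← hgl]; exact List.dropLast_append_getLast hpne
      set q := p.dropLast with hqdef
      have hqne : q ≠ [] := by
        intro h
        rw [h, List.nil_append] at hpd
        rw [← hpd] at hhd
        simp at hhd
        exact hab hhd.symm
      set m₀ := q.getLast hqne with hm₀
      have hchq : q.Chain' E ∧ E m₀ b := by
        rw [← hpd, List.Chain', List.isChain_append] at hch
        refine ⟨hch.1, hch.2.2 m₀ ?_ b rfl⟩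
        rw [List.getLast?_eq_getLast hqne]; rfl
      have hq : IsDirPath E a m₀ q := by
        refine ⟨hchq.1, hnd.sublist (hqdef ▸ List.dropLast_sublist p), ?_,
          List.getLast?_eq_getLast hqne⟩
        rw [← hpd, List.head?_append] at hhd
        cases hx : q.head? with
        | none => exact absurd (List.head?_eq_none_iff.mp hx) hqne
        | some c => rw [hx] at hhd; simpa using hhd
      have hupq : ∀ r, IsDirPath E a m₀ r → r = q := by
        intro r hr
        have hext := extend_path hr hchq.2 (not_mem_of_path_edge hacyc hr hchq.2)
        have := hup (r ++ [b]) hext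
        rw [← hpd] at this
        exact List.append_cancel_right this
      rw [hstep b a, Matrix.one_apply_ne (Ne.symm hab), zero_add]
      rw [Finset.sum_eq_single m₀]
      · rw [(IH m₀ hchq.2 a).2 q hq hupq, ← hpd, pw_concat G q hqne b, ← hm₀]
        ring
      · intro m _ hm
        by_cases hg : G b m = 0
        · rw [hg, zero_mul]
        · have hE : E m b := hsupp b m hg
          have hnom : ¬ ∃ l, IsDirPath E a m l := by
            rintro ⟨r, hr⟩
            have hext := extend_path hr hE (not_mem_of_path_edge hacyc hr hE)
            have heq := hup (r ++ [b]) hext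
            rw [← hpd] at heq
            have hrq : r = q := List.append_cancel_right heq
            apply hm
            have hrl := hr.2.2.2
            rw [hrq, List.getLast?_eq_getLast hqne] at hrl
            exact (Option.some_injective _ hrl.symm)
          rw [(IH m hE a).1 hnom, mul_zero]
      · intro h; exact absurd (Finset.mem_univ m₀) h

/-- In a DAG, if there is a unique directed path from `i` to `j`
and this path passes through the edge `(ν, μ)`, then the entry `T j i` of
`T = (I - G)⁻¹` factors as `T j i = T j μ * G μ ν * T ν i`. -/
theorem unique_path_factorization {F : Type*} [Field F] {L : ℕ}
    (E : Fin L → Fin L → Prop)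
    (hacyc : ∀ v, ¬ Relation.TransGen E v v)
    (G T : Matrix (Fin L) (Fin L) F)
    (hsupp : ∀ i j, G i j ≠ 0 → E j i)
    (hT1 : (1 - G) * T = 1) (hT2 : T * (1 - G) = 1)
    (i j ν μ : Fin L)
    (huniq : ∃! l : List (Fin L), IsDirPath E i j l)
    (hedge : ∀ l : List (Fin L), IsDirPath E i j l → [ν, μ] <:+: l) :
    T j i = T j μ * G μ ν * T ν i := by
  have hstep : ∀ b a, T b a = (1 : Matrix (Fin L) (Fin L) F) b a + ∑ m, G b m * T m a := by
    have hTeq : T = 1 + G * T := by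
      rw [sub_mul, one_mul] at hT1
      exact sub_eq_iff_eq_add.mp hT1
    intro b a
    conv_lhs => rw [hTeq]
    rw [Matrix.add_apply, Matrix.mul_apply]
  have key := key_path_sum E hacyc G T hsupp hstep
  obtain ⟨l₀, hp₀, hup₀'⟩ := huniq
  have hup₀ : ∀ l, IsDirPath E i j l → l = l₀ := fun l h => hup₀' l h
  obtain ⟨s, t, hst⟩ := hedge l₀ hp₀
  have hl₀ : l₀ = (s ++ [ν]) ++ (μ :: t) := by rw [← hst]; simp
  obtain ⟨hch, hnd, hhd, hlast⟩ := hp₀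
  rw [hl₀, List.Chain', List.isChain_append] at hch
  obtain ⟨ch1, ch2, hmid⟩ := hch
  have hEνμ : E ν μ := hmid ν (by rw [List.getLast?_concat]; rfl) μ rfl
  rw [hl₀, List.nodup_append] at hnd
  obtain ⟨n1, n2, disj⟩ := hnd
  -- heads and lasts
  have hsνne : (s ++ [ν] : List (Fin L)) ≠ [] := by simp
  have hhd₁ : (s ++ [ν]).head? = some i := by
    rw [hl₀, List.head?_append] at hhd
    cases hx : (s ++ [ν]).head? with
    | none => exact absurd (List.head?_eq_none_iff.mp hx) hsνne
    | some c => rw [hx] at hhd; simpa using hhd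
  have hlast₂ : (μ :: t).getLast? = some j := by
    rw [hl₀, List.getLast?_append] at hlast
    cases hx : (μ :: t).getLast? with
    | none => simp at hx
    | some c => rw [hx] at hlast; simpa using hlast
  have hp₁ : IsDirPath E i ν (s ++ [ν]) := ⟨ch1, n1, hhd₁, List.getLast?_concat⟩
  have hp₂ : IsDirPath E μ j (μ :: t) := ⟨ch2, n2, rfl, hlast₂⟩
  -- uniqueness of the two sub-paths
  have hdisj : ∀ (r₁ r₂ : List (Fin L)), IsDirPath E i ν r₁ → IsDirPath E μ j r₂ →
      r₁.Disjoint r₂ := by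
    intro r₁ r₂ h₁ h₂ x hx₁ hx₂
    have rtg1 : Relation.ReflTransGen E x ν := chain'_rtg_last r₁ h₁.1 x hx₁ ν h₁.2.2.2
    have rtg2 : Relation.ReflTransGen E μ x := chain'_rtg_head r₂ h₂.1 μ h₂.2.2.1 x hx₂
    exact hacyc x (Relation.TransGen.trans_right rtg1 (Relation.TransGen.head' hEνμ rtg2))
  have hglue : ∀ (r₁ r₂ : List (Fin L)), IsDirPath E i ν r₁ → IsDirPath E μ j r₂ →
      IsDirPath E i j (r₁ ++ r₂) := by
    intro r₁ r₂ h₁ h₂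
    obtain ⟨c₁, d₁, e₁, f₁⟩ := h₁
    obtain ⟨c₂, d₂, e₂, f₂⟩ := h₂
    have hr₂ne : r₂ ≠ [] := by rintro rfl; simp at e₂
    refine ⟨?_, ?_, ?_, ?_⟩
    · rw [List.Chain', List.isChain_append]
      refine ⟨c₁, c₂, ?_⟩
      intro x hx y hy
      rw [f₁] at hx; rw [e₂] at hy
      simp only [Option.mem_some_iff] at hx hy
      subst hx; subst hy; exact hEνμ
    · exact List.Nodup.append d₁ d₂ (hdisj r₁ r₂ ⟨c₁, d₁, e₁, f₁⟩ ⟨c₂, d₂, e₂, f₂⟩)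
    · rw [List.head?_append, e₁]; rfl
    · rw [List.getLast?_append, f₂]; rfl
  have hup₁ : ∀ r, IsDirPath E i ν r → r = s ++ [ν] := by
    intro r hr
    have := hup₀ (r ++ (μ :: t)) (hglue r (μ :: t) hr hp₂)
    rw [hl₀] at this
    exact List.append_cancel_right this
  have hup₂ : ∀ r, IsDirPath E μ j r → r = μ :: t := by
    intro r hr
    have := hup₀ ((s ++ [ν]) ++ r) (hglue (s ++ [ν]) r hp₁ hr)
    rw [hl₀] at this
    exact List.append_cancel_left this
  have e₀ : T j i = pw G l₀ := (key j i).2 l₀ ⟨by rw [hl₀, List.Chain', List.isChain_append]; exact ⟨ch1, ch2, hmid⟩,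
    by rw [hl₀, List.nodup_append]; exact ⟨n1, n2, disj⟩, hhd, hlast⟩ hup₀
  have e₁ : T ν i = pw G (s ++ [ν]) := (key ν i).2 _ hp₁ hup₁
  have e₂ : T j μ = pw G (μ :: t) := (key j μ).2 _ hp₂ hup₂
  rw [e₀, e₁, e₂, hl₀]
  have : (s ++ [ν]) ++ (μ :: t) = s ++ ν :: (μ :: t) := by simp
  rw [this, pw_glue G s ν (μ :: t)]
  show pw G (s ++ [ν]) * pw G (ν :: μ :: t) = _
  rw [show pw G (ν :: μ :: t) = G μ ν * pw G (μ :: t) from rfl]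
  ring
end

section
/- (Menger's theorem, vertex version) For vertex subsets 𝒳 and 𝒴 of a finite directed graph, the minimum cardinality of a disconnecting set from 𝒳 to 𝒴 (a vertex set meeting every directed path from 𝒳 to 𝒴, possibly including vertices of 𝒳 or 𝒴) equals the maximum number of mutually vertex-disjoint directed paths from 𝒳 to 𝒴. -/
open List
set_option linter.unusedSectionVars false

/-- A directed path from the set `X` to the set `Y`: a list of distinct
vertices joined by edges, starting in `X` and ending in `Y` (possibly a single
vertex in `X ∩ Y`). -/
def IsPathBetween {V : Type*} (E : V → V → Prop) (X Y : Set V) (l : List V) : Prop :=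
  l.Chain' E ∧ l.Nodup ∧ (∃ x, l.head? = some x ∧ x ∈ X) ∧
    (∃ y, l.getLast? = some y ∧ y ∈ Y)

/-- A disconnecting set from `X` to `Y`: a vertex set meeting every directed
path from `X` to `Y`. -/
def IsDisconnecting {V : Type*} (E : V → V → Prop) (X Y : Set V) (D : Finset V) : Prop :=
  ∀ l, IsPathBetween E X Y l → ∃ d ∈ D, d ∈ l

section Helpers
variable {V : Type*} [DecidableEq V] {E : V → V → Prop}

/-- Shortcut a chain-walk to a nodup chain with the same endpoints, vertices a subset. -/
lemma shortcut_aux (E : V → V → Prop) :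
    ∀ n (l : List V), l.length ≤ n → l.Chain' E → ∃ p : List V, p.Chain' E ∧ p.Nodup ∧
      p.head? = l.head? ∧ p.getLast? = l.getLast? ∧ ∀ v ∈ p, v ∈ l := by
  intro n
  induction n with
  | zero =>
    intro l hl _
    have : l = [] := List.eq_nil_of_length_eq_zero (Nat.le_zero.1 hl)
    exact ⟨[], by simp [this, List.Chain']⟩
  | succ n ih =>
    intro l hl hc
    match l with
    | [] => exact ⟨[], by simp [List.Chain']⟩
    | [x] => exact ⟨[x], by simp [List.Chain']⟩
    | x :: y :: t =>
      by_cases hx : x ∈ y :: t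
      · obtain ⟨s, u, hsu⟩ := List.append_of_mem hx
        have hsuf : (x :: u) <:+ (x :: y :: t) := ⟨x :: s, by rw [hsu]; simp⟩
        have hlen : (x :: u).length ≤ n := by
          have := hsuf.length_le
          have h2 : (x :: y :: t).length = s.length + (x :: u).length + 1 := by
            rw [hsu]; simp [List.length_append]
          omega
        obtain ⟨p, hp1, hp2, hp3, hp4, hp5⟩ := ih (x :: u) hlen (hc.suffix hsuf)
        refine ⟨p, hp1, hp2, by simp [hp3], ?_, fun v hv => hsuf.subset (hp5 v hv)⟩
        rw [hp4]
        have : (x :: y :: t) = (x :: s) ++ (x :: u) := by rw [hsu]; simp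
        rw [this, getLast?_append_of_ne_nil _ (by simp)]
      · have hc' : (y :: t).Chain' E := hc.tail
        obtain ⟨p, hp1, hp2, hp3, hp4, hp5⟩ := ih (y :: t) (by simpa using hl) hc'
        have hpne : p ≠ [] := by
          intro h; rw [h] at hp3; simp at hp3
        refine ⟨x :: p, ?_, ?_, by simp, ?_, ?_⟩
        · unfold List.Chain'; rw [List.isChain_cons]
          refine ⟨fun z hz => ?_, hp1⟩
          rw [hp3] at hz
          simp at hz
          subst hz
          exact (List.isChain_cons.1 hc).1 y rfl
        · exact List.nodup_cons.2 ⟨fun h => hx (hp5 x h), hp2⟩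
        · have h1 : (x :: p) = [x] ++ p := rfl
          have h2 : (x :: y :: t) = [x] ++ (y :: t) := rfl
          rw [h1, h2, getLast?_append_of_ne_nil _ hpne, getLast?_append_of_ne_nil _ (by simp), hp4]
        · intro v hv
          rcases List.mem_cons.1 hv with h | h
          · simp [h]
          · exact List.mem_cons_of_mem x (hp5 v h)

lemma shortcut {E : V → V → Prop} {l : List V} (hc : l.Chain' E) :
    ∃ p : List V, p.Chain' E ∧ p.Nodup ∧
      p.head? = l.head? ∧ p.getLast? = l.getLast? ∧ ∀ v ∈ p, v ∈ l :=
  shortcut_aux E l.length l le_rfl hc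

/-- Truncate a nodup chain at the first vertex satisfying `Q`. -/
lemma truncFirst {E : V → V → Prop} (Q : V → Prop) :
    ∀ l : List V, l.Chain' E → l.Nodup → (∃ v ∈ l, Q v) →
    ∃ (t : List V) (x : V), t.Chain' E ∧ t.Nodup ∧ t.head? = l.head? ∧
      t.getLast? = some x ∧ Q x ∧ (∀ v ∈ t, v ∈ l) ∧ (∀ v ∈ t, Q v → v = x) := by
  intro l
  induction l with
  | nil => rintro _ _ ⟨v, hv, _⟩; simp at hv
  | cons a l ih =>
    intro hc hn hex
    by_cases ha : Q a
    · exact ⟨[a], a, by simp [List.Chain'], by simp, rfl, rfl, ha, by simp, by simp⟩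
    · have hex' : ∃ v ∈ l, Q v := by
        obtain ⟨v, hv, hQ⟩ := hex
        rcases List.mem_cons.1 hv with h | h
        · exact absurd (h ▸ hQ) ha
        · exact ⟨v, h, hQ⟩
      obtain ⟨t, x, h1, h2, h3, h4, h5, h6, h7⟩ := ih hc.tail (List.nodup_cons.1 hn).2 hex'
      have htne : t ≠ [] := by intro h; rw [h] at h4; simp at h4
      refine ⟨a :: t, x, ?_, ?_, rfl, ?_, h5, ?_, ?_⟩
      · unfold List.Chain'; rw [List.isChain_cons]
        refine ⟨fun z hz => ?_, h1⟩
        rw [h3] at hz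
        exact (List.isChain_cons.1 hc).1 z hz
      · exact List.nodup_cons.2 ⟨fun h => (List.nodup_cons.1 hn).1 (h6 a h), h2⟩
      · have h1' : (a :: t) = [a] ++ t := rfl
        rw [h1', getLast?_append_of_ne_nil _ htne, h4]
      · intro v hv
        rcases List.mem_cons.1 hv with h | h
        · simp [h]
        · exact List.mem_cons_of_mem a (h6 v h)
      · intro v hv hQ
        rcases List.mem_cons.1 hv with h | h
        · exact absurd (h ▸ hQ) ha
        · exact h7 v h hQ

/-- Truncate a nodup chain at the last vertex satisfying `Q`. -/
lemma truncLast {E : V → V → Prop} (Q : V → Prop) (l : List V)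
    (hc : l.Chain' E) (hn : l.Nodup) (hex : ∃ v ∈ l, Q v) :
    ∃ (t : List V) (x : V), t.Chain' E ∧ t.Nodup ∧ t.getLast? = l.getLast? ∧
      t.head? = some x ∧ Q x ∧ (∀ v ∈ t, v ∈ l) ∧ (∀ v ∈ t, Q v → v = x) := by
  have hc' : l.reverse.Chain' (flip E) := List.isChain_reverse.2 hc
  obtain ⟨t, x, h1, h2, h3, h4, h5, h6, h7⟩ := truncFirst (E := flip E) Q l.reverse hc'
    (by simpa using hn) (by simpa using hex)
  refine ⟨t.reverse, x, ?_, by simpa using h2, ?_, ?_, h5, ?_, ?_⟩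
  · unfold List.Chain'; rw [List.isChain_reverse]; simpa [Function.flip_def, List.Chain'] using h1
  · rw [List.getLast?_reverse, h3, List.head?_reverse]
  · rw [List.head?_reverse, h4]
  · intro v hv; have := h6 v (List.mem_reverse.1 hv); simpa using this
  · intro v hv hQ; exact h7 v (List.mem_reverse.1 hv) hQ

/-- Easy direction: a disjoint path family is no larger than any disconnecting set. -/
lemma family_le_disconnecting {E : V → V → Prop} {X Y : Set V} {P : Finset (List V)}
    (hP : ∀ l ∈ P, IsPathBetween E X Y l)
    (hdisj : ∀ l ∈ P, ∀ l' ∈ P, l ≠ l' → ∀ v, v ∈ l → v ∉ l')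
    {D : Finset V} (hD : IsDisconnecting E X Y D) : P.card ≤ D.card := by
  classical
  rcases P.eq_empty_or_nonempty with rfl | ⟨l₀, hl₀⟩
  · simp
  have : Nonempty V := by
    obtain ⟨_, _, ⟨x, _, _⟩, _⟩ := hP l₀ hl₀
    exact ⟨x⟩
  have hchoice : ∀ l ∈ P, ∃ d ∈ D, d ∈ l := fun l hl => hD l (hP l hl)
  choose! f hf1 hf2 using hchoice
  apply Finset.card_le_card_of_injOn f (fun l hl => hf1 l hl)
  intro l hl l' hl' hll'
  by_contra hne
  exact hdisj l hl l' hl' hne (f l) (hf2 l hl) (hll' ▸ hf2 l' hl')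

/-- If a list is an `E`-chain but not an `E'`-chain, it has a consecutive bad pair. -/
lemma exists_bad_pair {E E' : V → V → Prop} :
    ∀ l : List V, l.Chain' E → ¬ l.Chain' E' →
    ∃ (p q : List V) (x y : V), l = p ++ x :: y :: q ∧ E x y ∧ ¬ E' x y := by
  intro l
  induction l with
  | nil => intro _ h; exact absurd List.isChain_nil h
  | cons a l ih =>
    intro hc hnc
    match l with
    | [] => exact absurd (List.isChain_singleton a) hnc
    | b :: t =>
      by_cases hab : E' a b
      · have hnc' : ¬ (b :: t).Chain' E' := by
          intro h
          exact hnc (List.isChain_cons_cons.2 ⟨hab, h⟩)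
        obtain ⟨p, q, x, y, h1, h2, h3⟩ := ih (List.isChain_cons_cons.1 hc).2 hnc'
        exact ⟨a :: p, q, x, y, by rw [List.cons_append, h1], h2, h3⟩
      · exact ⟨[], t, a, b, rfl, (List.isChain_cons_cons.1 hc).1, hab⟩

/-- Restricting a chain to the relation with one edge `(a,b)` removed, provided
`a` does not occur before the last position. -/
lemma chain'_restrict {E : V → V → Prop} {a b : V} {l : List V}
    (hc : l.Chain' E) (ha : a ∉ l.dropLast) :
    l.Chain' (fun u v => E u v ∧ ¬(u = a ∧ v = b)) := by
  unfold List.Chain' at hc ⊢; rw [List.isChain_iff_getElem] at hc ⊢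
  intro i hi
  refine ⟨hc i hi, fun ⟨h1, _⟩ => ha ?_⟩
  rw [← h1]
  have hlt : i < l.dropLast.length := by
    rw [List.length_dropLast]; omega
  have : l.dropLast[i]'hlt = l[i] := by
    simp [List.getElem_dropLast]
  rw [← this]
  exact List.getElem_mem _

lemma head?_append_cons (p : List V) (x : V) (q q' : List V) :
    (p ++ x :: q).head? = (p ++ x :: q').head? := by cases p <;> simp

/-- Base case: no non-loop edges. -/
lemma menger_noedges [Fintype V] {E : V → V → Prop} {X Y : Set V} {k : ℕ}
    (hE : ∀ a b, E a b → a = b)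
    (hk : ∀ D : Finset V, IsDisconnecting E X Y D → k ≤ D.card) :
    ∃ P : Finset (List V), (∀ l ∈ P, IsPathBetween E X Y l) ∧
      (∀ l ∈ P, ∀ l' ∈ P, l ≠ l' → ∀ v, v ∈ l → v ∉ l') ∧ P.card = k := by
  classical
  have hsingle : ∀ l, IsPathBetween E X Y l → ∃ v, l = [v] ∧ v ∈ X ∧ v ∈ Y := by
    rintro l ⟨hc, hn, ⟨x, hx1, hx2⟩, ⟨y, hy1, hy2⟩⟩
    match l with
    | [] => simp at hx1
    | [v] =>
      simp at hx1 hy1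
      exact ⟨v, rfl, hx1 ▸ hx2, hy1 ▸ hy2⟩
    | u :: w :: t =>
      have : E u w := (List.isChain_cons_cons.1 hc).1
      have huw : u = w := hE u w this
      simp [huw] at hn
  set W : Finset V := Finset.univ.filter (fun v => v ∈ X ∧ v ∈ Y) with hW
  have hWdisc : IsDisconnecting E X Y W := by
    intro l hl
    obtain ⟨v, rfl, hv1, hv2⟩ := hsingle l hl
    exact ⟨v, by simp [hW, hv1, hv2], by simp⟩
  obtain ⟨T, hTW, hTcard⟩ := Finset.exists_subset_card_eq (hk W hWdisc)
  refine ⟨T.image (fun v => [v]), ?_, ?_, ?_⟩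
  · intro l hl
    obtain ⟨v, hv, rfl⟩ := Finset.mem_image.1 hl
    have := hTW hv
    rw [hW, Finset.mem_filter] at this
    exact ⟨by simp [List.Chain'], by simp, ⟨v, rfl, this.2.1⟩, ⟨v, rfl, this.2.2⟩⟩
  · intro l hl l' hl' hne v hv hv'
    obtain ⟨w, _, rfl⟩ := Finset.mem_image.1 hl
    obtain ⟨w', _, rfl⟩ := Finset.mem_image.1 hl'
    simp at hv hv'
    exact hne (show [w] = [w'] by rw [hv] at hv'; rw [hv'])
  · rw [Finset.card_image_of_injective _ (fun u u' h => by simpa using h), hTcard]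

open Finset in
/-- The hard direction of Menger's theorem, by induction on the number of
non-loop edges. -/
lemma menger_hard [Fintype V] : ∀ (N : ℕ) (E : V → V → Prop),
    {p : V × V | E p.1 p.2 ∧ p.1 ≠ p.2}.ncard ≤ N →
    ∀ (X Y : Set V) (k : ℕ), (∀ D : Finset V, IsDisconnecting E X Y D → k ≤ D.card) →
    ∃ P : Finset (List V), (∀ l ∈ P, IsPathBetween E X Y l) ∧
      (∀ l ∈ P, ∀ l' ∈ P, l ≠ l' → ∀ v, v ∈ l → v ∉ l') ∧ P.card = k := by
  classical
  intro N
  induction N with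
  | zero =>
    intro E hE X Y k hk
    refine menger_noedges (fun a b hab => ?_) hk
    by_contra hne
    have hmem : (a, b) ∈ {p : V × V | E p.1 p.2 ∧ p.1 ≠ p.2} := ⟨hab, hne⟩
    have h0 : {p : V × V | E p.1 p.2 ∧ p.1 ≠ p.2}.ncard = 0 := Nat.le_zero.1 hE
    rw [Set.ncard_eq_zero (Set.toFinite _)] at h0
    rw [h0] at hmem
    exact hmem
  | succ N ih =>
    intro E hE X Y k hk
    by_cases hloop : ∀ a b, E a b → a = b
    · exact menger_noedges hloop hk
    · push_neg at hloop
      obtain ⟨a, b, hEab, hab⟩ := hloop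
      set E' : V → V → Prop := fun u v => E u v ∧ ¬(u = a ∧ v = b) with hE'def
      have hE'chain : ∀ {l : List V}, l.Chain' E' → l.Chain' E :=
        fun h => h.imp (fun _ _ hh => hh.1)
      have hE'card : {p : V × V | E' p.1 p.2 ∧ p.1 ≠ p.2}.ncard ≤ N := by
        have hss : {p : V × V | E' p.1 p.2 ∧ p.1 ≠ p.2} ⊂
            {p : V × V | E p.1 p.2 ∧ p.1 ≠ p.2} := by
          constructor
          · rintro p ⟨hp1, hp2⟩
            exact ⟨hp1.1, hp2⟩
          · intro hsub
            have : (a, b) ∈ {p : V × V | E' p.1 p.2 ∧ p.1 ≠ p.2} := hsub ⟨hEab, hab⟩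
            exact this.1.2 ⟨rfl, rfl⟩
        have := Set.ncard_lt_ncard hss (Set.toFinite _)
        omega
      by_cases hsep : ∀ D : Finset V, IsDisconnecting E' X Y D → k ≤ D.card
      · obtain ⟨P, h1, h2, h3⟩ := ih E' hE'card X Y k hsep
        refine ⟨P, fun l hl => ?_, h2, h3⟩
        obtain ⟨c, n, hx, hy⟩ := h1 l hl
        exact ⟨hE'chain c, n, hx, hy⟩
      push_neg at hsep
      obtain ⟨S, hS, hSlt⟩ := hsep
      -- `insert a S` and `insert b S` disconnect `X` from `Y` in `E`.
      have hbad : ∀ {l : List V}, l.Chain' E → ¬ l.Chain' E' →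
          ∃ p q : List V, l = p ++ a :: b :: q := by
        intro l hc hch
        obtain ⟨p, q, x, y, hl, hxy, hnxy⟩ := exists_bad_pair l hc hch
        have hxa : x = a ∧ y = b := by
          by_contra h
          exact hnxy ⟨hxy, h⟩
        exact ⟨p, q, by rw [hl, hxa.1, hxa.2]⟩
      have hdiscA : IsDisconnecting E X Y (insert a S) := by
        rintro l ⟨hc, hn, hx, hy⟩
        by_cases hch : l.Chain' E'
        · obtain ⟨d, hd1, hd2⟩ := hS l ⟨hch, hn, hx, hy⟩
          exact ⟨d, Finset.mem_insert_of_mem hd1, hd2⟩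
        · obtain ⟨p, q, hl⟩ := hbad hc hch
          exact ⟨a, Finset.mem_insert_self _ _, by simp [hl]⟩
      have hdiscB : IsDisconnecting E X Y (insert b S) := by
        rintro l ⟨hc, hn, hx, hy⟩
        by_cases hch : l.Chain' E'
        · obtain ⟨d, hd1, hd2⟩ := hS l ⟨hch, hn, hx, hy⟩
          exact ⟨d, Finset.mem_insert_of_mem hd1, hd2⟩
        · obtain ⟨p, q, hl⟩ := hbad hc hch
          exact ⟨b, Finset.mem_insert_self _ _, by simp [hl]⟩
      have haS : a ∉ S := by
        intro h
        have := hk _ hdiscA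
        rw [Finset.insert_eq_self.2 h] at this
        omega
      have hbS : b ∉ S := by
        intro h
        have := hk _ hdiscB
        rw [Finset.insert_eq_self.2 h] at this
        omega
      have hAcard : (insert a S).card = k := by
        have h1 := hk _ hdiscA
        have h2 := Finset.card_insert_of_notMem haS
        omega
      have hBcard : (insert b S).card = k := by
        have h1 := hk _ hdiscB
        have h2 := Finset.card_insert_of_notMem hbS
        omega
      -- every disconnecting set from X to `insert a S` in E' has size ≥ k
      have hCA : ∀ T : Finset V, IsDisconnecting E' X (↑(insert a S) : Set V) T →
          k ≤ T.card := by
        intro T hT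
        apply hk
        rintro l ⟨hc, hn, ⟨x0, hh, hx0⟩, ⟨y0, hg, hy0⟩⟩
        by_cases hch : l.Chain' E'
        · obtain ⟨s, hs1, hs2⟩ := hS l ⟨hch, hn, ⟨x0, hh, hx0⟩, ⟨y0, hg, hy0⟩⟩
          obtain ⟨t, x, ht1, ht2, ht3, ht4, ht5, ht6, -⟩ :=
            truncFirst (E := E') (fun v => v ∈ insert a S) l hch hn
              ⟨s, hs2, Finset.mem_insert_of_mem hs1⟩
          obtain ⟨d, hd1, hd2⟩ := hT t ⟨ht1, ht2, ⟨x0, ht3.trans hh, hx0⟩,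
            ⟨x, ht4, by exact_mod_cast ht5⟩⟩
          exact ⟨d, hd1, ht6 d hd2⟩
        · obtain ⟨p, q, hl⟩ := hbad hc hch
          have hpre : (p ++ [a]) <+: l := ⟨b :: q, by simp [hl]⟩
          have hanp : a ∉ p := by
            rw [hl] at hn
            exact fun hmem => (List.disjoint_of_nodup_append hn) hmem (by simp)
          have hcpre' : (p ++ [a]).Chain' E' := by
            refine chain'_restrict (hc.prefix hpre) ?_
            simpa [List.dropLast_concat] using hanp
          have hheadpre : (p ++ [a]).head? = l.head? := by
            rw [hl]
            exact head?_append_cons p a [] (b :: q)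
          obtain ⟨d, hd1, hd2⟩ := hT (p ++ [a]) ⟨hcpre', hpre.sublist.nodup hn,
            ⟨x0, hheadpre.trans hh, hx0⟩,
            ⟨a, by simp, by simp⟩⟩
          refine ⟨d, hd1, hpre.sublist.subset hd2⟩
      have hCB : ∀ T : Finset V, IsDisconnecting E' (↑(insert b S) : Set V) Y T →
          k ≤ T.card := by
        intro T hT
        apply hk
        rintro l ⟨hc, hn, ⟨x0, hh, hx0⟩, ⟨y0, hg, hy0⟩⟩
        by_cases hch : l.Chain' E'
        · obtain ⟨s, hs1, hs2⟩ := hS l ⟨hch, hn, ⟨x0, hh, hx0⟩, ⟨y0, hg, hy0⟩⟩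
          obtain ⟨t, x, ht1, ht2, ht3, ht4, ht5, ht6, -⟩ :=
            truncLast (E := E') (fun v => v ∈ insert b S) l hch hn
              ⟨s, hs2, Finset.mem_insert_of_mem hs1⟩
          obtain ⟨d, hd1, hd2⟩ := hT t ⟨ht1, ht2, ⟨x, ht4, by exact_mod_cast ht5⟩,
            ⟨y0, ht3.trans hg, hy0⟩⟩
          exact ⟨d, hd1, ht6 d hd2⟩
        · obtain ⟨p, q, hl⟩ := hbad hc hch
          have hsuf : (b :: q) <:+ l := ⟨p ++ [a], by simp [hl]⟩
          have hanbq : a ∉ b :: q := by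
            rw [hl] at hn
            have := (List.Nodup.of_append_right hn : (a :: b :: q).Nodup)
            exact (List.nodup_cons.1 this).1
          have hcsuf' : (b :: q).Chain' E' := by
            refine chain'_restrict (hc.suffix hsuf) ?_
            exact fun hmem => hanbq ((List.dropLast_sublist _).subset hmem)
          have hlastsuf : (b :: q).getLast? = l.getLast? := by
            rw [hl]
            have : p ++ a :: b :: q = (p ++ [a]) ++ b :: q := by simp
            rw [this, getLast?_append_of_ne_nil _ (by simp)]
          obtain ⟨d, hd1, hd2⟩ := hT (b :: q) ⟨hcsuf', hsuf.sublist.nodup hn,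
            ⟨b, by simp, by simp⟩,
            ⟨y0, hlastsuf.trans hg, hy0⟩⟩
          refine ⟨d, hd1, hsuf.sublist.subset hd2⟩
      obtain ⟨P₁, hP₁path, hP₁disj, hP₁card⟩ := ih E' hE'card X (↑(insert a S)) k hCA
      obtain ⟨P₂, hP₂path, hP₂disj, hP₂card⟩ := ih E' hE'card (↑(insert b S)) Y k hCB
      -- truncate the first family at the first vertex of `insert a S`
      have htr1 : ∀ l : List V, ∃ t : List V, l ∈ P₁ →
          t.Chain' E' ∧ t.Nodup ∧ t.head? = l.head? ∧
          (∃ x, t.getLast? = some x ∧ x ∈ insert a S ∧ ∀ v ∈ t, v ∈ insert a S → v = x) ∧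
          (∀ v ∈ t, v ∈ l) := by
        intro l
        by_cases hl : l ∈ P₁
        · obtain ⟨hc, hn, hx, ⟨y, hy1, hy2⟩⟩ := hP₁path l hl
          obtain ⟨t, x, h1, h2, h3, h4, h5, h6, h7⟩ :=
            truncFirst (E := E') (fun v => v ∈ insert a S) l hc hn
              ⟨y, List.mem_of_mem_getLast? (by simp [hy1]), by exact_mod_cast hy2⟩
          exact ⟨t, fun _ => ⟨h1, h2, h3, ⟨x, h4, h5, h7⟩, h6⟩⟩
        · exact ⟨[], fun h => absurd h hl⟩
      choose tr htr using htr1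
      -- truncate the second family at the last vertex of `insert b S`
      have htr2 : ∀ l : List V, ∃ t : List V, l ∈ P₂ →
          t.Chain' E' ∧ t.Nodup ∧ t.getLast? = l.getLast? ∧
          (∃ x, t.head? = some x ∧ x ∈ insert b S ∧ ∀ v ∈ t, v ∈ insert b S → v = x) ∧
          (∀ v ∈ t, v ∈ l) := by
        intro l
        by_cases hl : l ∈ P₂
        · obtain ⟨hc, hn, ⟨y, hy1, hy2⟩, hx⟩ := hP₂path l hl
          obtain ⟨t, x, h1, h2, h3, h4, h5, h6, h7⟩ :=
            truncLast (E := E') (fun v => v ∈ insert b S) l hc hn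
              ⟨y, List.mem_of_mem_head? (by simp [hy1]), by exact_mod_cast hy2⟩
          exact ⟨t, fun _ => ⟨h1, h2, h3, ⟨x, h4, h5, h7⟩, h6⟩⟩
        · exact ⟨[], fun h => absurd h hl⟩
      choose tr₂ htr₂ using htr2
      -- heads of truncated first-family paths lie in X
      have hhead1 : ∀ l ∈ P₁, ∃ x0, (tr l).head? = some x0 ∧ x0 ∈ X := by
        intro l hl
        obtain ⟨x0, hx1, hx2⟩ := (hP₁path l hl).2.2.1
        exact ⟨x0, ((htr l hl).2.2.1).trans hx1, hx2⟩
      have hlast2 : ∀ l ∈ P₂, ∃ y0, (tr₂ l).getLast? = some y0 ∧ y0 ∈ Y := by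
        intro l hl
        obtain ⟨y0, hy1, hy2⟩ := (hP₂path l hl).2.2.2
        exact ⟨y0, ((htr₂ l hl).2.2.1).trans hy1, hy2⟩
      have htrne : ∀ l ∈ P₁, tr l ≠ [] := by
        intro l hl h
        obtain ⟨x0, hx1, -⟩ := hhead1 l hl
        rw [h] at hx1; simp at hx1
      have htr₂ne : ∀ l ∈ P₂, tr₂ l ≠ [] := by
        intro l hl h
        obtain ⟨x0, hx1, -⟩ := (htr₂ l hl).2.2.2.1
        rw [h] at hx1; simp at hx1
      have hdj1 : ∀ l ∈ P₁, ∀ l' ∈ P₁, l ≠ l' → ∀ v, v ∈ tr l → v ∉ tr l' := by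
        intro l hl l' hl' hne v hv hv'
        exact hP₁disj l hl l' hl' hne v ((htr l hl).2.2.2.2 v hv)
          ((htr l' hl').2.2.2.2 v hv')
      have hdj2 : ∀ l ∈ P₂, ∀ l' ∈ P₂, l ≠ l' → ∀ v, v ∈ tr₂ l → v ∉ tr₂ l' := by
        intro l hl l' hl' hne v hv hv'
        exact hP₂disj l hl l' hl' hne v ((htr₂ l hl).2.2.2.2 v hv)
          ((htr₂ l' hl').2.2.2.2 v hv')
      have hlastval : ∀ l ∈ P₁, (tr l).getLast? = some (((tr l).getLast?).getD a) := by
        intro l hl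
        obtain ⟨x, hx, -, -⟩ := (htr l hl).2.2.2.1
        simp [hx]
      have hheadval : ∀ l ∈ P₂, (tr₂ l).head? = some (((tr₂ l).head?).getD a) := by
        intro l hl
        obtain ⟨x, hx, -, -⟩ := (htr₂ l hl).2.2.2.1
        simp [hx]
      have hIm1 : P₁.image (fun l => ((tr l).getLast?).getD a) = insert a S := by
        apply Finset.eq_of_subset_of_card_le
        · intro s hs
          obtain ⟨l, hl, hval⟩ := Finset.mem_image.1 hs
          obtain ⟨x, hx, hxA, -⟩ := (htr l hl).2.2.2.1
          rw [← hval]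
          simpa [hx] using hxA
        · rw [hAcard, Finset.card_image_of_injOn, hP₁card]
          intro l hl l' hl' heq
          by_contra hne
          have h1 := hlastval l (Finset.mem_coe.1 hl)
          have h2 := hlastval l' (Finset.mem_coe.1 hl')
          have heq' : ((tr l).getLast?).getD a = ((tr l').getLast?).getD a := heq
          rw [heq'] at h1
          exact hdj1 l (Finset.mem_coe.1 hl) l' (Finset.mem_coe.1 hl') hne _
            (List.mem_of_mem_getLast? h1) (List.mem_of_mem_getLast? h2)
      have hIm2 : P₂.image (fun l => ((tr₂ l).head?).getD a) = insert b S := by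
        apply Finset.eq_of_subset_of_card_le
        · intro s hs
          obtain ⟨l, hl, hval⟩ := Finset.mem_image.1 hs
          obtain ⟨x, hx, hxB, -⟩ := (htr₂ l hl).2.2.2.1
          rw [← hval]
          simpa [hx] using hxB
        · rw [hBcard, Finset.card_image_of_injOn, hP₂card]
          intro l hl l' hl' heq
          by_contra hne
          have h1 := hheadval l (Finset.mem_coe.1 hl)
          have h2 := hheadval l' (Finset.mem_coe.1 hl')
          have heq' : ((tr₂ l).head?).getD a = ((tr₂ l').head?).getD a := heq
          rw [heq'] at h1
          exact hdj2 l (Finset.mem_coe.1 hl) l' (Finset.mem_coe.1 hl') hne _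
            (List.mem_of_mem_head? h1) (List.mem_of_mem_head? h2)
      have hsurj1 : ∀ s : V, ∃ l : List V, s ∈ insert a S →
          l ∈ P₁ ∧ (tr l).getLast? = some s := by
        intro s
        by_cases hs : s ∈ insert a S
        · rw [← hIm1] at hs
          obtain ⟨l, hl, hval⟩ := Finset.mem_image.1 hs
          refine ⟨l, fun _ => ⟨hl, ?_⟩⟩
          rw [hlastval l hl, hval]
        · exact ⟨[], fun h => absurd h hs⟩
      choose F₁ hF₁ using hsurj1
      have hsurj2 : ∀ s : V, ∃ l : List V, s ∈ insert b S →
          l ∈ P₂ ∧ (tr₂ l).head? = some s := by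
        intro s
        by_cases hs : s ∈ insert b S
        · rw [← hIm2] at hs
          obtain ⟨l, hl, hval⟩ := Finset.mem_image.1 hs
          refine ⟨l, fun _ => ⟨hl, ?_⟩⟩
          rw [hheadval l hl, hval]
        · exact ⟨[], fun h => absurd h hs⟩
      choose F₂ hF₂ using hsurj2
      -- key crossing lemma: a common vertex of a truncated first-family path and a
      -- truncated second-family path must be the last (resp. first) vertex and lie in S
      have hcross : ∀ l₁ ∈ P₁, ∀ l₂ ∈ P₂, ∀ v, v ∈ tr l₁ → v ∈ tr₂ l₂ →
          (tr l₁).getLast? = some v ∧ (tr₂ l₂).head? = some v ∧ v ∈ S := by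
        intro l₁ hl₁ l₂ hl₂ v hv1 hv2
        obtain ⟨hc1, hn1, -, ⟨s₁, hg1, hs₁A, honly1⟩, -⟩ := htr l₁ hl₁
        obtain ⟨hc2, hn2, -, ⟨s₂, hh2, hs₂B, honly2⟩, -⟩ := htr₂ l₂ hl₂
        obtain ⟨p, q, h₁⟩ := List.append_of_mem hv1
        obtain ⟨p₂, q₂, h₂⟩ := List.append_of_mem hv2
        have hvq : v ∉ q := by
          intro h
          rw [h₁] at hn1
          exact (List.nodup_cons.1 (List.Nodup.of_append_right hn1)).1 h
        have hvq₂ : v ∉ q₂ := by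
          intro h
          rw [h₂] at hn2
          exact (List.nodup_cons.1 (List.Nodup.of_append_right hn2)).1 h
        -- the combined walk
        have hcw : (p ++ v :: q₂).Chain' E' := by
          have c1 : (p ++ [v]).Chain' E' := hc1.prefix ⟨q, by simp [h₁]⟩
          have c2 : (v :: q₂).Chain' E' := hc2.suffix ⟨p₂, by simp [h₂]⟩
          have := c1.append c2.tail (by
            intro x hx y hy
            simp only [List.getLast?_append, List.getLast?_singleton] at hx
            have hxv : x = v := by have h := hx; simp at h; exact h.symm
            subst hxv
            exact (List.isChain_cons.1 c2).1 y hy)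
          simpa [List.Chain'] using this
        have hwh : (p ++ v :: q₂).head? = (tr l₁).head? := by
          rw [h₁]; exact head?_append_cons p v q₂ q
        have hwg : (p ++ v :: q₂).getLast? = (tr₂ l₂).getLast? := by
          rw [h₂]
          show (p ++ (v :: q₂)).getLast? = (p₂ ++ (v :: q₂)).getLast?
          rw [getLast?_append_of_ne_nil _ (by simp), getLast?_append_of_ne_nil _ (by simp)]
        obtain ⟨ρ, hρc, hρn, hρh, hρg, hρsub⟩ := shortcut hcw
        obtain ⟨x0, hx01, hx02⟩ := hhead1 l₁ hl₁
        obtain ⟨y0, hy01, hy02⟩ := hlast2 l₂ hl₂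
        have hρpath : IsPathBetween E' X Y ρ :=
          ⟨hρc, hρn, ⟨x0, by rw [hρh, hwh, hx01], hx02⟩,
            ⟨y0, by rw [hρg, hwg, hy01], hy02⟩⟩
        obtain ⟨d, hdS, hdρ⟩ := hS ρ hρpath
        have hdw : d ∈ p ++ v :: q₂ := hρsub d hdρ
        have hdv : d = v := by
          rcases List.mem_append.1 hdw with hd | hd
          · -- d ∈ p ⊆ tr l₁, d ∈ S, so d = s₁ = last, but last is in v :: q
            exfalso
            have hdt1 : d ∈ tr l₁ := by rw [h₁]; exact List.mem_append_left _ hd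
            have hds₁ : d = s₁ := honly1 d hdt1 (Finset.mem_insert_of_mem hdS)
            have hs₁vq : s₁ ∈ v :: q := by
              apply List.mem_of_mem_getLast?
              rw [← getLast?_append_of_ne_nil p (l₂ := v :: q) (by simp), ← h₁, hg1]
              rfl
            rw [h₁] at hn1
            exact (List.disjoint_of_nodup_append hn1) (hds₁ ▸ hd) hs₁vq
          · rcases List.mem_cons.1 hd with hd' | hd'
            · exact hd'
            · -- d ∈ q₂ ⊆ tr₂ l₂, d ∈ S, so d = s₂ = head, but head is in p₂ ++ [v]
              exfalso
              have hdt2 : d ∈ tr₂ l₂ := by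
                rw [h₂]
                exact List.mem_append_right _ (List.mem_cons_of_mem _ hd')
              have hds₂ : d = s₂ := honly2 d hdt2 (Finset.mem_insert_of_mem hdS)
              rw [h₂] at hh2 hn2
              match p₂, hh2 with
              | [], hh2 =>
                have : s₂ = v := by have h := hh2; simp at h; exact h.symm
                exact hvq₂ (this ▸ hds₂ ▸ hd')
              | c :: p₂', hh2 =>
                have hs₂c : s₂ = c := by simpa using hh2.symm
                exact (List.disjoint_of_nodup_append hn2) (by simp [hs₂c])
                  (List.mem_cons_of_mem _ (hds₂ ▸ hd'))
        subst hdv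
        refine ⟨?_, ?_, hdS⟩
        · rw [← (honly1 d hv1 (Finset.mem_insert_of_mem hdS))] at hg1
          exact hg1
        · rw [← (honly2 d hv2 (Finset.mem_insert_of_mem hdS))] at hh2
          exact hh2
      -- glue the two families along `insert a S`
      set m : V → V := fun s => if s = a then b else s with hm
      set g : V → List V := fun s =>
        if s = a then tr (F₁ a) ++ tr₂ (F₂ b) else tr (F₁ s) ++ (tr₂ (F₂ s)).tail with hg
      have hmB : ∀ s ∈ insert a S, m s ∈ insert b S := by
        intro s hs
        by_cases hsa : s = a
        · simp [hm, hsa]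
        · have : s ∈ S := Finset.mem_of_mem_insert_of_ne hs hsa
          simp [hm, hsa, Finset.mem_insert_of_mem this]
      have hminj : ∀ s ∈ insert a S, ∀ s' ∈ insert a S, m s = m s' → s = s' := by
        intro s hs s' hs' heq
        by_cases hsa : s = a <;> by_cases hsa' : s' = a
        · rw [hsa, hsa']
        · exfalso
          have hs'S : s' ∈ S := Finset.mem_of_mem_insert_of_ne hs' hsa'
          simp [hm, hsa, hsa'] at heq
          exact hbS (heq ▸ hs'S)
        · exfalso
          have hsS : s ∈ S := Finset.mem_of_mem_insert_of_ne hs hsa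
          simp [hm, hsa, hsa'] at heq
          exact hbS (heq ▸ hsS)
        · simpa [hm, hsa, hsa'] using heq
      have hF₁ne : ∀ s ∈ insert a S, ∀ s' ∈ insert a S, s ≠ s' → F₁ s ≠ F₁ s' := by
        intro s hs s' hs' hne heq
        have h1 := (hF₁ s hs).2
        have h2 := (hF₁ s' hs').2
        rw [heq, h2] at h1
        exact hne (by injection h1 with h; exact h.symm)
      have hF₂ne : ∀ s ∈ insert b S, ∀ s' ∈ insert b S, s ≠ s' → F₂ s ≠ F₂ s' := by
        intro s hs s' hs' hne heq
        have h1 := (hF₂ s hs).2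
        have h2 := (hF₂ s' hs').2
        rw [heq, h2] at h1
        exact hne (by injection h1 with h; exact h.symm)
      -- vertices of a glued path
      have hgsub : ∀ s ∈ insert a S, ∀ v ∈ g s, v ∈ tr (F₁ s) ∨ v ∈ tr₂ (F₂ (m s)) := by
        intro s hs v hv
        by_cases hsa : s = a
        · subst hsa
          rw [hg] at hv
          simp only [if_pos rfl] at hv
          rcases List.mem_append.1 hv with h | h
          · exact Or.inl h
          · right; rw [hm]; simpa using h
        · rw [hg] at hv
          simp only [if_neg hsa] at hv
          rcases List.mem_append.1 hv with h | h
          · exact Or.inl h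
          · right
            rw [hm]
            simp only [if_neg hsa]
            exact List.mem_of_mem_tail h
      have hgne : ∀ s ∈ insert a S, g s ≠ [] := by
        intro s hs h
        have h1 := htrne _ (hF₁ s hs).1
        by_cases hsa : s = a
        · rw [hg] at h
          simp only [if_pos hsa] at h
          rw [← hsa] at h
          exact h1 (List.append_eq_nil_iff.1 h).1
        · rw [hg] at h
          simp only [if_neg hsa] at h
          exact h1 (List.append_eq_nil_iff.1 h).1
      -- each glued list is an E-path from X to Y
      have hgpath : ∀ s ∈ insert a S, IsPathBetween E X Y (g s) := by
        intro s hs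
        have hF₁s := hF₁ s hs
        obtain ⟨hc1, hn1, -, -, -⟩ := htr _ hF₁s.1
        obtain ⟨x0, hx01, hx02⟩ := hhead1 _ hF₁s.1
        by_cases hsa : s = a
        · have hF₂b := hF₂ b (Finset.mem_insert_self _ _)
          obtain ⟨hc2, hn2, -, -, -⟩ := htr₂ _ hF₂b.1
          obtain ⟨y0, hy01, hy02⟩ := hlast2 _ hF₂b.1
          have hgval : g s = tr (F₁ s) ++ tr₂ (F₂ b) := by
            rw [hg]; simp only [if_pos hsa]; rw [hsa]
          rw [hgval]
          refine ⟨?_, ?_, ?_, ?_⟩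
          · refine (hE'chain hc1).append (hE'chain hc2) ?_
            intro x hx y hy
            rw [hF₁s.2] at hx
            have hxa : s = x := by simpa using hx
            rw [hF₂b.2] at hy
            have hyb : b = y := by simpa using hy
            rw [← hxa, ← hyb, hsa]
            exact hEab
          · rw [List.nodup_append]
            refine ⟨hn1, hn2, fun v hv v' hv' hvv' => ?_⟩
            subst hvv'
            obtain ⟨hlast, -, hvS⟩ := hcross _ hF₁s.1 _ hF₂b.1 v hv hv'
            rw [hF₁s.2] at hlast
            have hvs : s = v := by injection hlast
            rw [← hvs] at hvS
            exact haS (hsa ▸ hvS)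
          · exact ⟨x0, by rw [head?_append_of_ne_nil _ (htrne _ hF₁s.1), hx01], hx02⟩
          · exact ⟨y0, by rw [getLast?_append_of_ne_nil _ (htr₂ne _ hF₂b.1), hy01], hy02⟩
        · have hsS : s ∈ S := Finset.mem_of_mem_insert_of_ne hs hsa
          have hF₂s := hF₂ s (Finset.mem_insert_of_mem hsS)
          obtain ⟨hc2, hn2, -, -, -⟩ := htr₂ _ hF₂s.1
          obtain ⟨y0, hy01, hy02⟩ := hlast2 _ hF₂s.1
          obtain ⟨u, hu⟩ : ∃ u, tr₂ (F₂ s) = s :: u := by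
            have h2 := hF₂s.2
            cases hul : tr₂ (F₂ s) with
            | nil => rw [hul] at h2; simp at h2
            | cons c u =>
              rw [hul] at h2
              simp only [List.head?_cons, Option.some.injEq] at h2
              exact ⟨u, by rw [h2]⟩
          have hgval : g s = tr (F₁ s) ++ u := by
            rw [hg]; simp only [if_neg hsa]; rw [hu]; rfl
          rw [hgval]
          have hc2' : (s :: u).Chain' E' := hu ▸ hc2
          have hn2' : (s :: u).Nodup := hu ▸ hn2
          refine ⟨?_, ?_, ?_, ?_⟩
          · refine (hE'chain hc1).append (hE'chain hc2'.tail) ?_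
            intro x hx y hy
            rw [hF₁s.2] at hx
            have hxs : s = x := by simpa using hx
            rw [← hxs]
            exact ((List.isChain_cons.1 hc2').1 y hy).1
          · rw [List.nodup_append]
            refine ⟨hn1, hn2'.of_cons, fun v hv v' hv' hvv' => ?_⟩
            subst hvv'
            obtain ⟨-, hhead, -⟩ := hcross _ hF₁s.1 _ hF₂s.1 v hv
              (hu ▸ List.mem_cons_of_mem s hv')
            rw [hF₂s.2] at hhead
            have hvs : s = v := by injection hhead
            exact (List.nodup_cons.1 hn2').1 (hvs ▸ hv')
          · exact ⟨x0, by rw [head?_append_of_ne_nil _ (htrne _ hF₁s.1), hx01], hx02⟩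
          · rcases eq_or_ne u [] with rfl | hune
            · refine ⟨y0, ?_, hy02⟩
              rw [hu] at hy01
              simp only [List.append_nil]
              have : s = y0 := by simpa using hy01
              rw [hF₁s.2, this]
            · refine ⟨y0, ?_, hy02⟩
              rw [getLast?_append_of_ne_nil _ hune]
              rw [hu] at hy01
              rw [← hy01]
              exact (getLast?_append_of_ne_nil [s] hune).symm
      -- glued paths are pairwise vertex-disjoint
      have hgdisj : ∀ s ∈ insert a S, ∀ s' ∈ insert a S, s ≠ s' →
          ∀ v ∈ g s, v ∉ g s' := by
        intro s hs s' hs' hne v hv hv'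
        rcases hgsub s hs v hv with h1 | h1 <;> rcases hgsub s' hs' v hv' with h2 | h2
        · exact hdj1 _ (hF₁ s hs).1 _ (hF₁ s' hs').1
            (fun h => hF₁ne s hs s' hs' hne (by rw [h])) v h1 h2
        · -- v ∈ tr (F₁ s) and v ∈ tr₂ (F₂ (m s'))
          obtain ⟨hlast, hhead, hvS⟩ := hcross _ (hF₁ s hs).1 _ (hF₂ _ (hmB s' hs')).1 v h1 h2
          rw [(hF₁ s hs).2] at hlast
          have hvs : v = s := by injection hlast with h; exact h.symm
          rw [(hF₂ _ (hmB s' hs')).2] at hhead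
          have hvm : v = m s' := by injection hhead with h; exact h.symm
          by_cases hs'a : s' = a
          · have : m s' = b := by simp [hm, hs'a]
            exact hbS (this ▸ hvm ▸ hvS)
          · have : m s' = s' := by simp [hm, hs'a]
            exact hne (hvs ▸ this ▸ hvm)
        · obtain ⟨hlast, hhead, hvS⟩ := hcross _ (hF₁ s' hs').1 _ (hF₂ _ (hmB s hs)).1 v h2 h1
          rw [(hF₁ s' hs').2] at hlast
          have hvs : v = s' := by injection hlast with h; exact h.symm
          rw [(hF₂ _ (hmB s hs)).2] at hhead
          have hvm : v = m s := by injection hhead with h; exact h.symm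
          by_cases hsa : s = a
          · have : m s = b := by simp [hm, hsa]
            exact hbS (this ▸ hvm ▸ hvS)
          · have : m s = s := by simp [hm, hsa]
            exact hne (hvs ▸ this ▸ hvm).symm
        · refine hdj2 _ (hF₂ _ (hmB s hs)).1 _ (hF₂ _ (hmB s' hs')).1 ?_ v h1 h2
          intro h
          exact hF₂ne _ (hmB s hs) _ (hmB s' hs')
            (fun hmm => hne (hminj s hs s' hs' hmm)) (by rw [h])
      refine ⟨(insert a S).image g, ?_, ?_, ?_⟩
      · intro l hl
        obtain ⟨s, hs, rfl⟩ := Finset.mem_image.1 hl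
        exact hgpath s hs
      · intro l hl l' hl' hne v hv
        obtain ⟨s, hs, rfl⟩ := Finset.mem_image.1 hl
        obtain ⟨s', hs', rfl⟩ := Finset.mem_image.1 hl'
        have hss' : s ≠ s' := fun h => hne (by rw [h])
        exact hgdisj s hs s' hs' hss' v hv
      · rw [Finset.card_image_of_injOn, hAcard]
        intro s hs s' hs' heq
        by_contra hne
        have hgne' := hgne s (Finset.mem_coe.1 hs)
        obtain ⟨v, hv⟩ := List.exists_mem_of_ne_nil _ hgne'
        exact hgdisj s (Finset.mem_coe.1 hs) s' (Finset.mem_coe.1 hs') hne v hv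
          (heq ▸ hv)

end Helpers

/-- Menger, vertex version: the minimum cardinality of a
disconnecting set from `X` to `Y` equals the maximum number of mutually
vertex-disjoint directed paths from `X` to `Y`. -/
theorem menger_vertex {V : Type*} [Fintype V] [DecidableEq V]
    (E : V → V → Prop) (X Y : Set V) :
    ∃ n : ℕ,
      IsLeast {m | ∃ D : Finset V, IsDisconnecting E X Y D ∧ D.card = m} n ∧
      IsGreatest {k | ∃ P : Finset (List V),
        (∀ l ∈ P, IsPathBetween E X Y l) ∧
        (∀ l ∈ P, ∀ l' ∈ P, l ≠ l' → ∀ v, v ∈ l → v ∉ l') ∧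
        P.card = k} n := by
  classical
  have huniv : IsDisconnecting E X Y Finset.univ := by
    rintro l ⟨-, -, ⟨x, hx, -⟩, -⟩
    exact ⟨x, Finset.mem_univ x, List.mem_of_mem_head? (by simp [hx])⟩
  have hne : {m | ∃ D : Finset V, IsDisconnecting E X Y D ∧ D.card = m}.Nonempty :=
    ⟨Finset.univ.card, Finset.univ, huniv, rfl⟩
  set n := sInf {m | ∃ D : Finset V, IsDisconnecting E X Y D ∧ D.card = m} with hn
  obtain ⟨D₀, hD₀, hD₀card⟩ := Nat.sInf_mem hne
  have hmin : ∀ D : Finset V, IsDisconnecting E X Y D → n ≤ D.card :=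
    fun D hD => Nat.sInf_le ⟨D, hD, rfl⟩
  refine ⟨n, ⟨Nat.sInf_mem hne, fun m hm => Nat.sInf_le hm⟩, ?_, ?_⟩
  · exact menger_hard ({p : V × V | E p.1 p.2 ∧ p.1 ≠ p.2}.ncard) E le_rfl X Y n hmin
  · rintro k ⟨P, hP, hdisj, rfl⟩
    calc P.card ≤ D₀.card := family_le_disconnecting hP hdisj hD₀
    _ = n := hD₀card
end

section
/- If 𝒟 is a disconnecting set from 𝒳 to 𝒴 in a directed acyclic graph with associated matrix G and T = (I − G)^{-1}, then there exists a matrix K such that the submatrix [T]_{𝒴,𝒳} = K [T]_{𝒟,𝒳}. -/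
/-- In a `Chain'`-list, any earlier element is `TransGen`-related to any later one. -/
lemma chain'_sublist_transGen {α : Type*} {r : α → α → Prop} :
    ∀ {l : List α}, l.Chain' r → ∀ {a b : α}, List.Sublist [a, b] l → Relation.TransGen r a b := by
  intro l hl a b h
  induction l with
  | nil => cases h
  | cons c t ih =>
    have hchain : List.Chain r c t := hl
    cases h with
    | cons _ h' => exact ih hl.tail h'
    | cons_cons _ h' =>
      have hb : b ∈ t := h'.subset (by simp)
      exact List.IsChain.rel_cons (List.IsChain.imp (fun _ _ h => Relation.TransGen.single h) hl) hb

lemma chain_of_pow_ne_zero {F : Type*} [Field F] {L : ℕ}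
    (E' : Fin L → Fin L → Prop) (A : Matrix (Fin L) (Fin L) F)
    (hA : ∀ i j, A i j ≠ 0 → E' j i) :
    ∀ (n : ℕ) (i j : Fin L), (A ^ n) j i ≠ 0 →
      ∃ l : List (Fin L), l.length = n + 1 ∧ l.Chain' E' ∧
        l.head? = some i ∧ l.getLast? = some j := by
  intro n
  induction n with
  | zero =>
    intro i j h
    rw [pow_zero] at h
    have hij : j = i := by
      by_contra hne
      exact h (Matrix.one_apply_ne hne)
    exact ⟨[i], rfl, List.isChain_singleton i, rfl, by simp [hij]⟩
  | succ n ih =>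
    intro i j h
    rw [pow_succ, Matrix.mul_apply] at h
    obtain ⟨k, -, hk⟩ := Finset.exists_ne_zero_of_sum_ne_zero h
    have h1 : (A ^ n) j k ≠ 0 := fun hz => hk (by simp [hz])
    have h2 : A k i ≠ 0 := fun hz => hk (by simp [hz])
    obtain ⟨l, hlen, hchain, hhead, hlast⟩ := ih k j h1
    cases l with
    | nil => simp at hhead
    | cons c t =>
      have hck : c = k := by simpa using hhead
      refine ⟨i :: c :: t, by simpa using hlen, ?_, rfl, by
        rw [List.getLast?_cons_cons]; exact hlast⟩
      exact List.IsChain.cons_cons (hck ▸ hA k i h2) hchain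

lemma pow_card_eq_zero {F : Type*} [Field F] {L : ℕ}
    (E' : Fin L → Fin L → Prop)
    (hacyc : ∀ v, ¬ Relation.TransGen E' v v)
    (A : Matrix (Fin L) (Fin L) F)
    (hA : ∀ i j, A i j ≠ 0 → E' j i) : A ^ L = 0 := by
  ext j i
  rw [Matrix.zero_apply]
  by_contra h
  obtain ⟨l, hlen, hchain, -, -⟩ := chain_of_pow_ne_zero E' A hA L i j h
  have hnd : ¬ l.Nodup := by
    intro hnd
    have := hnd.length_le_card
    rw [hlen, Fintype.card_fin] at this
    omega
  rw [List.nodup_iff_sublist] at hnd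
  push_neg at hnd
  obtain ⟨a, ha⟩ := hnd
  exact hacyc a (chain'_sublist_transGen hchain ha)

/-- If `D` is a disconnecting set from `X` to `Y` in a DAG with
matrix `G` and `T = (I - G)⁻¹`, then there is a matrix `K` with
`[T]_{Y,X} = K [T]_{D,X}`. -/
theorem disconnecting_set_factorization {F : Type*} [Field F] {L : ℕ}
    (E : Fin L → Fin L → Prop)
    (hacyc : ∀ v, ¬ Relation.TransGen E v v)
    (G T : Matrix (Fin L) (Fin L) F)
    (hsupp : ∀ i j, G i j ≠ 0 → E j i)
    (hT1 : (1 - G) * T = 1) (hT2 : T * (1 - G) = 1)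
    (X Y D : Finset (Fin L))
    (hdisc : ∀ (x y : Fin L), x ∈ X → y ∈ Y →
      ∀ l : List (Fin L), IsDirPath E x y l → ∃ d ∈ D, d ∈ l) :
    ∃ K : Matrix {v // v ∈ Y} {v // v ∈ D} F,
      ∀ (y : {v // v ∈ Y}) (x : {v // v ∈ X}),
        T (y : Fin L) (x : Fin L) = ∑ d : {v // v ∈ D}, K y d * T (d : Fin L) (x : Fin L) := by
  classical
  -- G'' : G with all rows indexed by D zeroed out
  set G'' : Matrix (Fin L) (Fin L) F := fun j i => if j ∈ D then 0 else G j i with hG''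
  set E'' : Fin L → Fin L → Prop := fun a b => E a b ∧ b ∉ D with hE''
  have hsupp'' : ∀ i j, G'' i j ≠ 0 → E'' j i := by
    intro i j h
    by_cases hi : i ∈ D
    · simp [hG'', hi] at h
    · exact ⟨hsupp i j (by simpa [hG'', hi] using h), hi⟩
  have hacyc'' : ∀ v, ¬ Relation.TransGen E'' v v := fun v h =>
    hacyc v (Relation.TransGen.mono (p := E) (fun a b (hab : E'' a b) => hab.1) v v h)
  have hnil : G'' ^ L = 0 := pow_card_eq_zero E'' hacyc'' G'' hsupp''
  set T'' : Matrix (Fin L) (Fin L) F := ∑ k ∈ Finset.range L, G'' ^ k with hT''def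
  have hT''inv : T'' * (1 - G'') = 1 := by
    have hgs := geom_sum_mul G'' L
    rw [hnil, zero_sub, ← hT''def] at hgs
    rw [← neg_sub G'' 1, mul_neg, hgs, neg_neg]
  -- T = 1 + G * T
  have hTe : G * T = T - 1 := by
    have h := hT1
    rw [sub_mul, one_mul] at h
    rw [← h]
    abel
  -- off-D elements of E''-chains
  have hE''end : ∀ a b : Fin L, Relation.TransGen E'' a b → b ∉ D := by
    intro a b h
    induction h with
    | single h => exact h.2
    | tail _ h _ => exact h.2
  -- vanishing of T'' on Y × (X \ D)
  have hvanish : ∀ y x : Fin L, x ∈ X → y ∈ Y → x ∉ D → T'' y x = 0 := by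
    intro y x hx hy hxD
    rw [hT''def, Matrix.sum_apply]
    apply Finset.sum_eq_zero
    intro k _
    by_contra h
    obtain ⟨l, hlen, hchain, hhead, hlast⟩ :=
      chain_of_pow_ne_zero E'' G'' hsupp'' k x y h
    have hchainE : l.Chain' E := hchain.imp fun a b hab => hab.1
    have hnd : l.Nodup := by
      rw [List.nodup_iff_sublist]
      intro a ha
      exact hacyc a (chain'_sublist_transGen hchainE ha)
    obtain ⟨d, hdD, hdl⟩ := hdisc x y hx hy l ⟨hchainE, hnd, hhead, hlast⟩
    cases l with
    | nil => simp at hhead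
    | cons c t =>
      have hcx : c = x := by simpa using hhead
      rcases List.mem_cons.mp hdl with h1 | h2
      · exact hxD (hcx ▸ h1 ▸ hdD)
      · have hchain2 : List.Chain E'' c t := hchain
        have htg : Relation.TransGen E'' c d :=
          List.IsChain.rel_cons (List.IsChain.imp (fun _ _ h => Relation.TransGen.single h) hchain2) h2
        exact hE''end c d htg hdD
  -- key decomposition T = T'' + T'' (G - G'') T
  have key : T = T'' + T'' * ((G - G'') * T) := by
    have h1 : (1 - G'') * T = 1 + (G - G'') * T := by
      rw [sub_mul, sub_mul, one_mul, hTe]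
      abel
    calc T = 1 * T := (one_mul T).symm
      _ = T'' * (1 - G'') * T := by rw [hT''inv]
      _ = T'' * ((1 - G'') * T) := by rw [mul_assoc]
      _ = T'' * (1 + (G - G'') * T) := by rw [h1]
      _ = T'' + T'' * ((G - G'') * T) := by rw [mul_add, mul_one]
  have hrow : ∀ k x : Fin L, ((G - G'') * T) k x =
      if k ∈ D then T k x - (1 : Matrix (Fin L) (Fin L) F) k x else 0 := by
    intro k x
    by_cases hk : k ∈ D
    · rw [if_pos hk]
      have hGG : ((G - G'') * T) k x = (G * T) k x := by
        rw [Matrix.mul_apply, Matrix.mul_apply]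
        apply Finset.sum_congr rfl
        intro m _
        rw [Matrix.sub_apply]
        simp [Matrix.sub_apply, hG'', hk, Pi.sub_apply]
      rw [hGG, hTe, Matrix.sub_apply]
    · rw [if_neg hk, Matrix.mul_apply]
      apply Finset.sum_eq_zero
      intro m _
      rw [Matrix.sub_apply]
      simp [Matrix.sub_apply, hG'', hk, Pi.sub_apply]
  refine ⟨fun y d => T'' (y : Fin L) (d : Fin L), ?_⟩
  intro y x
  have hx := x.2
  have hy := y.2
  have expand : T (y : Fin L) (x : Fin L) = T'' (y : Fin L) (x : Fin L) +
      ∑ k ∈ D, T'' (y : Fin L) k * (T k (x : Fin L) - (1 : Matrix (Fin L) (Fin L) F) k (x : Fin L)) := by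
    conv_lhs => rw [key]
    rw [Matrix.add_apply, Matrix.mul_apply]
    congr 1
    calc ∑ k, T'' (y : Fin L) k * ((G - G'') * T) k (x : Fin L)
        = ∑ k, if k ∈ D then T'' (y : Fin L) k * (T k (x : Fin L) - (1 : Matrix (Fin L) (Fin L) F) k (x : Fin L)) else 0 := by
          apply Finset.sum_congr rfl
          intro k _
          rw [hrow]
          split <;> simp
      _ = _ := by rw [Finset.sum_ite_mem, Finset.univ_inter]
  rw [expand, Finset.sum_coe_sort D (fun d => T'' (y : Fin L) d * T d (x : Fin L))]
  have split : ∑ k ∈ D, T'' (y : Fin L) k * (T k (x : Fin L) - (1 : Matrix (Fin L) (Fin L) F) k (x : Fin L))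
      = (∑ k ∈ D, T'' (y : Fin L) k * T k (x : Fin L))
        - ∑ k ∈ D, T'' (y : Fin L) k * (1 : Matrix (Fin L) (Fin L) F) k (x : Fin L) := by
    rw [← Finset.sum_sub_distrib]
    apply Finset.sum_congr rfl
    intro k _
    ring
  have hdelta : ∑ k ∈ D, T'' (y : Fin L) k * (1 : Matrix (Fin L) (Fin L) F) k (x : Fin L)
      = if (x : Fin L) ∈ D then T'' (y : Fin L) (x : Fin L) else 0 := by
    simp_rw [Matrix.one_apply, mul_ite, mul_one, mul_zero]
    exact Finset.sum_ite_eq' D (x : Fin L) (fun k => T'' (y : Fin L) k)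
  by_cases hxD : (x : Fin L) ∈ D
  · rw [split, hdelta, if_pos hxD]
    abel
  · rw [split, hdelta, if_neg hxD, hvanish (y : Fin L) (x : Fin L) hx hy hxD]
    abel
end
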